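/- arXiv:2108.06732 — 2 statements merged into one kernel-verified Lean document; each statement's English description precedes it below -/
import Mathlib

section
/- Let P ∈ ℤ[x] be a nonconstant polynomial and let q ≥ 2 be an integer. Then the set S = {n ∈ ℕ : there exists k ∈ ℕ with P(n) = q^k} has upper asymptotic density zero, i.e., limsup_{m→∞} #(S ∩ [0,m])/m = 0. -/
/-! For `n ≤ m` we have `|P n| ≤ C m ^ d` with `C` the sum of the absolute values of the
coefficients, so `P n = q ^ k` forces `2 ^ k ≤ C m ^ d`, i.e. `k = O(log m)`. Each value is taken
by `P` at most `d = deg P` times, so `[0, m]` contains `O(log m) = o(m)` elements of the set. -/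

open Filter Finset Polynomial Topology

/-- Upper asymptotic density of a set of natural numbers. -/
noncomputable def upperDensity (U : Set ℕ) : ℝ :=
  Filter.atTop.limsup (fun m : ℕ => ((U ∩ Set.Iic m).ncard : ℝ) / m)

theorem upperDensity_eq_zero_of_ncard_le_log {U : Set ℕ} {A B : ℝ}
    (h : ∀ᶠ m in atTop, ((U ∩ Set.Iic m).ncard : ℝ) ≤ A + B * Real.log m) :
    upperDensity U = 0 := by
  have hlog : Tendsto (fun m : ℕ => Real.log m / m) atTop (𝓝 0) :=
    Real.isLittleO_log_id_atTop.tendsto_div_nhds_zero.comp tendsto_natCast_atTop_atTop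
  have hbound : Tendsto (fun m : ℕ => (A + B * Real.log m) / m) atTop (𝓝 0) := by
    simpa [add_div, mul_div_assoc] using
      (tendsto_const_div_atTop_nhds_zero_nat A).add (hlog.const_mul B)
  refine (tendsto_of_tendsto_of_tendsto_of_le_of_le' tendsto_const_nhds hbound ?_ ?_).limsup_eq
  · exact .of_forall fun m => by positivity
  · filter_upwards [h] with m hm using div_le_div_of_nonneg_right hm m.cast_nonneg

namespace Polynomial

theorem abs_eval_le_sum_abs_coeff_mul_pow {R : Type*} [CommRing R] [LinearOrder R]
    [IsStrictOrderedRing R] (P : R[X]) {x y : R} (hxy : |x| ≤ y) (hy : 1 ≤ y) :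
    |P.eval x| ≤ (∑ i ∈ range (P.natDegree + 1), |P.coeff i|) * y ^ P.natDegree := by
  rw [eval_eq_sum_range, Finset.sum_mul]
  refine (abs_sum_le_sum_abs _ _).trans (sum_le_sum fun i hi => ?_)
  rw [abs_mul, abs_pow]
  refine mul_le_mul_of_nonneg_left ?_ (abs_nonneg _)
  calc |x| ^ i ≤ y ^ i := pow_le_pow_left₀ (abs_nonneg x) hxy i
    _ ≤ y ^ P.natDegree := pow_le_pow_right₀ hy (Nat.lt_succ_iff.mp (mem_range.mp hi))

theorem card_filter_eval_eq_le {α R : Type*} [CommRing R] [IsDomain R] [DecidableEq R] {P : R[X]}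
    (hP : 0 < P.natDegree) {f : α → R} (hf : Function.Injective f) (s : Finset α) (a : R) :
    #{x ∈ s | P.eval (f x) = a} ≤ P.natDegree := by
  have hPa : P - C a ≠ 0 := sub_ne_zero.mpr fun h => by simp [h] at hP
  calc #{x ∈ s | P.eval (f x) = a} ≤ #(P - C a).roots.toFinset := by
        refine card_le_card_of_injOn f (fun x hx => ?_) hf.injOn
        simp_all [mem_roots hPa]
    _ ≤ Multiset.card (P - C a).roots := Multiset.toFinset_card_le _
    _ ≤ P.natDegree := card_roots_sub_C' (natDegree_pos_iff_degree_pos.mp hP)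

theorem ncard_eval_eq_pow_inter_Iic_le {P : ℤ[X]} (hP : 0 < P.natDegree) {q : ℤ} (hq : 2 ≤ q)
    {m M : ℕ} (hM : ∀ n ≤ m, |P.eval (n : ℤ)| ≤ M) :
    ({n : ℕ | ∃ k : ℕ, P.eval (n : ℤ) = q ^ k} ∩ Set.Iic m).ncard ≤
      P.natDegree * (Nat.log 2 M + 1) := by
  classical
  have hset : {n : ℕ | ∃ k : ℕ, P.eval (n : ℤ) = q ^ k} ∩ Set.Iic m =
      ↑({n ∈ range (m + 1) | ∃ k : ℕ, P.eval (n : ℤ) = q ^ k} : Finset ℕ) := by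
    ext n
    simp [and_comm]
  have hexp : ∀ n ≤ m, ∀ k : ℕ, P.eval (n : ℤ) = q ^ k → k ≤ Nat.log 2 M := by
    intro n hn k hk
    refine Nat.le_log_of_pow_le one_lt_two ?_
    have : (2 : ℤ) ^ k ≤ M :=
      calc (2 : ℤ) ^ k ≤ q ^ k := pow_le_pow_left₀ zero_le_two hq k
        _ ≤ |P.eval (n : ℤ)| := hk ▸ le_abs_self _
        _ ≤ M := hM n hn
    exact_mod_cast this
  rw [hset, Set.ncard_coe_finset]
  calc _ ≤ P.natDegree * #((range (Nat.log 2 M + 1)).image (q ^ ·)) := by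
        refine card_le_mul_card_image_of_maps_to (f := fun n : ℕ => P.eval (n : ℤ))
          (fun n hn => ?_) _ fun b _ => card_filter_eval_eq_le hP Nat.cast_injective _ b
        obtain ⟨hn, k, hk⟩ := mem_filter.mp hn
        exact mem_image.mpr ⟨k, mem_range.mpr (Nat.lt_succ_of_le
          (hexp n (Nat.lt_succ_iff.mp (mem_range.mp hn)) k hk)), hk.symm⟩
    _ ≤ P.natDegree * (Nat.log 2 M + 1) := by
        gcongr
        exact card_image_le.trans (card_range _).le

end Polynomial

theorem stmt_8 (P : Polynomial ℤ) (hP : 0 < P.natDegree) (q : ℤ) (hq : 2 ≤ q) :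
    upperDensity {n : ℕ | ∃ k : ℕ, P.eval (n : ℤ) = q ^ k} = 0 := by
  set d := P.natDegree
  set C := ∑ i ∈ range (d + 1), (P.coeff i).natAbs
  have hC : 0 < C := sum_pos' (fun _ _ => Nat.zero_le _) ⟨d, self_mem_range_succ d,
    Int.natAbs_pos.mpr (leadingCoeff_ne_zero.mpr (ne_zero_of_natDegree_gt hP))⟩
  refine upperDensity_eq_zero_of_ncard_le_log
    (A := d * (Real.log C / Real.log 2 + 1)) (B := d * d / Real.log 2) ?_
  filter_upwards [eventually_ge_atTop 1] with m hm
  have hcount := ncard_eval_eq_pow_inter_Iic_le hP hq (M := C * m ^ d) fun n hn => by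
    have := P.abs_eval_le_sum_abs_coeff_mul_pow (x := (n : ℤ)) (y := m)
      (by simpa using hn) (by exact_mod_cast hm)
    push_cast [C]
    simpa using this
  have hlog : (Nat.log 2 (C * m ^ d) : ℝ) ≤ (Real.log C + d * Real.log m) / Real.log 2 :=
    calc _ ≤ Real.logb 2 (C * m ^ d : ℕ) := Real.natLog_le_logb _ _
      _ = _ := by
        push_cast
        rw [Real.logb, Real.log_mul (by positivity) (by positivity), Real.log_pow]
  calc _ ≤ (d : ℝ) * (Nat.log 2 (C * m ^ d) + 1) := by exact_mod_cast hcount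
    _ ≤ d * ((Real.log C + d * Real.log m) / Real.log 2 + 1) := by gcongr
    _ = _ := by ring
end

section
/- Let K be a division ring with center k, and let A ∈ M_n(K) be a matrix whose minimal polynomial over k factors as p(x) = p₁(x)·p₂(x) with p₁, p₂ ∈ k[x] coprime (i.e., there exist u, v ∈ k[x] with u·p₁ + v·p₂ = 1). Then there exists an invertible matrix P ∈ M_n(K) such that P^{-1} A P is block diagonal, P^{-1} A P = A₁ ⊕ A₂, where p₁(A₁) = 0 and p₂(A₂) = 0. -/
/-!
Write `u p₁ + v p₂ = 1`. Then `E = (v p₂)(A)` is an idempotent commuting with `A`, with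
`p₁(A) E = 0` and `p₂(A) (1 - E) = 0`. Over a division ring an idempotent matrix is similar to
`1 ⊕ 0` (take bases of its image and kernel). Conjugating `A` by the same matrix gives a matrix
commuting with `1 ⊕ 0`, hence block diagonal `A₁ ⊕ A₂`, and since conjugation is an algebra
homomorphism the two annihilation identities become `p₁(A₁) = 0` and `p₂(A₂) = 0`.
-/

open Polynomial

section Coprime

variable {k R : Type*} [CommRing k] [Ring R] [Algebra k R]

theorem exists_isIdempotentElem_of_isCoprime {a : R} {p₁ p₂ : k[X]} (hcop : IsCoprime p₁ p₂)
    (h : aeval a (p₁ * p₂) = 0) :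
    ∃ e : R, IsIdempotentElem e ∧ Commute e a ∧ aeval a p₁ * e = 0 ∧
      aeval a p₂ * (1 - e) = 0 := by
  obtain ⟨u, v, huv⟩ := hcop
  have hvanish : ∀ r s, p₁ * p₂ ∣ r * s → aeval a r * aeval a s = 0 := by
    rintro r s ⟨t, hrs⟩
    rw [← map_mul, hrs, map_mul, h, zero_mul]
  have hcompl : 1 - aeval a (v * p₂) = aeval a (u * p₁) := by
    rw [sub_eq_iff_eq_add, ← map_add, huv, map_one]
  refine ⟨aeval a (v * p₂), ?_, by simpa using (Commute.all (v * p₂) X).map (aeval a), ?_, ?_⟩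
  · rw [isIdempotentElem_iff_mul_one_sub_self, hcompl]
    exact hvanish _ _ ⟨v * u, by ring⟩
  · exact hvanish _ _ ⟨v, by ring⟩
  · rw [hcompl]
    exact hvanish _ _ ⟨u, by ring⟩

end Coprime

namespace Matrix

variable {m o α : Type*} [Fintype m] [Fintype o] [DecidableEq m]

theorem exists_eq_fromBlocks_of_commute [Semiring α] {N : Matrix (m ⊕ o) (m ⊕ o) α}
    (h : Commute (fromBlocks 1 0 0 0) N) : ∃ N₁ N₂, N = fromBlocks N₁ 0 0 N₂ := by
  rw [← fromBlocks_toBlocks N] at h ⊢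
  simp only [Commute, SemiconjBy, fromBlocks_multiply, fromBlocks_inj, Matrix.one_mul,
    Matrix.mul_one, Matrix.zero_mul, Matrix.mul_zero, add_zero, and_true, true_and] at h
  exact ⟨_, _, by rw [h.1, ← h.2]⟩

theorem fromBlocks_zero_pow [DecidableEq o] [Semiring α] (A : Matrix m m α) (D : Matrix o o α) (n : ℕ) :
    fromBlocks A 0 0 D ^ n = fromBlocks (A ^ n) 0 0 (D ^ n) := by
  induction n with
  | zero => simp [fromBlocks_one]
  | succ n ih => simp [pow_succ, ih, fromBlocks_multiply]

theorem aeval_fromBlocks_zero [DecidableEq o] {k : Type*} [CommSemiring k] [Semiring α] [Algebra k α]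
    (A : Matrix m m α) (D : Matrix o o α) (q : k[X]) :
    aeval (fromBlocks A 0 0 D) q = fromBlocks (aeval A q) 0 0 (aeval D q) := by
  induction q using Polynomial.induction_on' with
  | add p q hp hq => simp [hp, hq, fromBlocks_add]
  | monomial n c =>
    simp [aeval_monomial, ← Algebra.smul_def, fromBlocks_zero_pow, fromBlocks_smul]

variable (k : Type*) [CommSemiring k] [Semiring α] [Algebra k α] in
def conjAlgHom [DecidableEq o] {Q : Matrix o m α} {Q' : Matrix m o α} (hQQ' : Q * Q' = 1)
    (hQ'Q : Q' * Q = 1) : Matrix m m α →ₐ[k] Matrix o o α :=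
  AlgHom.ofLinearMap
    { toFun := fun M => Q * M * Q'
      map_add' := fun M N => by simp [Matrix.mul_add, Matrix.add_mul]
      map_smul' := fun c M => by simp [Matrix.mul_smul, Matrix.smul_mul] }
    (by simp [hQQ'])
    (fun M N => by simp [Matrix.mul_assoc, ← Matrix.mul_assoc Q' Q, hQ'Q])

theorem card_eq_of_mul_eq_one [DecidableEq o] {R : Type*} [Semiring R] [InvariantBasisNumber R]
    {Q : Matrix o m R} {Q' : Matrix m o R} (hQQ' : Q * Q' = 1) (hQ'Q : Q' * Q = 1) :
    Fintype.card m = Fintype.card o :=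
  card_eq_of_linearEquiv R (toLinearEquivRight'OfInv hQQ' hQ'Q)

theorem exists_mul_mul_eq_fromBlocks_of_isIdempotentElem {K : Type*} [DivisionRing K]
    {E : Matrix m m K} (hE : IsIdempotentElem E) :
    ∃ (n₁ n₂ : ℕ) (Q : Matrix (Fin n₁ ⊕ Fin n₂) m K) (Q' : Matrix m (Fin n₁ ⊕ Fin n₂) K),
      Q * Q' = 1 ∧ Q' * Q = 1 ∧ Q * E * Q' = fromBlocks 1 0 0 0 := by
  -- Row vectors: `v ↦ v ᵥ* E` is linear for the left `K`-module `m → K`; `v ↦ E *ᵥ v` is not.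
  set f := E.toLinearMapRight'
  have hf : IsIdempotentElem f := by
    rw [IsIdempotentElem, Module.End.mul_eq_comp, ← toLinearMapRight'_mul, hE.eq]
  let c := ((Module.finBasis K (LinearMap.range f)).prod
    (Module.finBasis K (LinearMap.ker f))).map
      (Submodule.prodEquivOfIsCompl _ _ (LinearMap.IsIdempotentElem.isCompl hf))
  have hc : ∀ s, f (c s) = Sum.elim (fun _ => c s) 0 s := by
    rintro (i | j)
    · simpa [c] using (LinearMap.IsIdempotentElem.mem_range_iff hf).mp (Subtype.prop _)
    · simp [c]
  refine ⟨_, _, LinearMap.toMatrixRight' c.equivFun.symm.toLinearMap,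
    LinearMap.toMatrixRight' c.equivFun.toLinearMap, ?_, ?_, ?_⟩
  · rw [← LinearMap.toMatrixRight'_comp]; simp
  · rw [← LinearMap.toMatrixRight'_comp]; simp
  · rw [← LinearMap.toMatrixRight'.apply_symm_apply E, ← LinearMap.toMatrixRight'_comp,
      ← LinearMap.toMatrixRight'_comp]
    ext s s'
    change c.equivFun (f (c.equivFun.symm (Pi.single s 1))) s' = _
    rw [Basis.equivFun_symm_single, hc, Module.Basis.equivFun_apply]
    rcases s with i | j <;> rcases s' with i' | j' <;> simp [one_apply, Finsupp.single_apply]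

end Matrix

open Matrix in
theorem stmt_11_general {K : Type*} [DivisionRing K] (n : ℕ)
    (A : Matrix (Fin n) (Fin n) K)
    (p p₁ p₂ : Polynomial (Subring.center K))
    (hfact : p = p₁ * p₂)
    (hcoprime : ∃ u v : Polynomial (Subring.center K), u * p₁ + v * p₂ = 1)
    (hann : Polynomial.aeval A p = 0) :
    ∃ (n₁ n₂ : ℕ) (A₁ : Matrix (Fin n₁) (Fin n₁) K) (A₂ : Matrix (Fin n₂) (Fin n₂) K)
      (P Pinv : Matrix (Fin n) (Fin n) K) (e : Fin n ≃ (Fin n₁ ⊕ Fin n₂)),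
      P * Pinv = 1 ∧ Pinv * P = 1 ∧
      Pinv * A * P = (Matrix.fromBlocks A₁ 0 0 A₂).submatrix e e ∧
      Polynomial.aeval A₁ p₁ = 0 ∧ Polynomial.aeval A₂ p₂ = 0 := by
  obtain ⟨E, hE, hEA, hE₁, hE₂⟩ := exists_isIdempotentElem_of_isCoprime hcoprime (hfact ▸ hann)
  obtain ⟨n₁, n₂, Q, Q', hQQ', hQ'Q, hQEQ'⟩ := exists_mul_mul_eq_fromBlocks_of_isIdempotentElem hE
  let φ := conjAlgHom (Subring.center K) hQQ' hQ'Q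
  have hφE : φ E = fromBlocks 1 0 0 0 := hQEQ'
  obtain ⟨A₁, A₂, hA⟩ := exists_eq_fromBlocks_of_commute (hφE ▸ hEA.map φ)
  have h₁ : aeval (φ A) p₁ * φ E = 0 := by rw [aeval_algHom_apply, ← map_mul, hE₁, map_zero]
  have h₂ : aeval (φ A) p₂ * (1 - φ E) = 0 := by
    rw [aeval_algHom_apply, ← map_one φ, ← map_sub, ← map_mul, hE₂, map_zero]
  rw [hA, hφE, aeval_fromBlocks_zero] at h₁ h₂
  rw [← fromBlocks_one, sub_eq_add_neg, fromBlocks_neg, fromBlocks_add] at h₂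
  simp only [fromBlocks_multiply, Matrix.mul_one, Matrix.mul_zero, mul_zero, add_zero,
    add_neg_cancel, neg_zero, zero_add] at h₁ h₂
  rw [← fromBlocks_zero, fromBlocks_inj] at h₁ h₂
  let e : Fin n ≃ Fin n₁ ⊕ Fin n₂ := Fintype.equivOfCardEq (card_eq_of_mul_eq_one hQQ' hQ'Q)
  refine ⟨n₁, n₂, A₁, A₂, Q'.submatrix id e, Q.submatrix e id, e, ?_, ?_, ?_, h₁.1, h₂.2.2.2⟩
  · rw [submatrix_mul_equiv, hQ'Q, submatrix_id_id]
  · rw [← submatrix_mul Q Q' e id e Function.bijective_id, hQQ', submatrix_one_equiv]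
  · rw [← submatrix_id_id A, ← submatrix_mul Q A e id id Function.bijective_id,
      ← submatrix_mul (Q * A) Q' e id e Function.bijective_id, ← hA]
    rfl

theorem stmt_11 {K : Type*} [DivisionRing K] (n : ℕ)
    (A : Matrix (Fin n) (Fin n) K)
    (p p₁ p₂ : Polynomial (Subring.center K))
    (hfact : p = p₁ * p₂)
    (hcoprime : ∃ u v : Polynomial (Subring.center K), u * p₁ + v * p₂ = 1)
    (hann : Polynomial.aeval A p = 0)
    (hmin : ∀ r : Polynomial (Subring.center K), Polynomial.aeval A r = 0 → p ∣ r) :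
    ∃ (n₁ n₂ : ℕ) (A₁ : Matrix (Fin n₁) (Fin n₁) K) (A₂ : Matrix (Fin n₂) (Fin n₂) K)
      (P Pinv : Matrix (Fin n) (Fin n) K) (e : Fin n ≃ (Fin n₁ ⊕ Fin n₂)),
      P * Pinv = 1 ∧ Pinv * P = 1 ∧
      Pinv * A * P = (Matrix.fromBlocks A₁ 0 0 A₂).submatrix e e ∧
      Polynomial.aeval A₁ p₁ = 0 ∧ Polynomial.aeval A₂ p₂ = 0 :=
  stmt_11_general n A p p₁ p₂ hfact hcoprime hann
end
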